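/- arXiv:1910.06802 — 2 statements merged into one kernel-verified Lean document; each statement's English description precedes it below -/
import Mathlib

section
/- Let X be a separable real Hilbert space with inner product ⟨·,·⟩ and Hilbert (orthonormal) basis (φ_k)_{k≥1}, let (λ_k)_{k≥1} be a nondecreasing sequence of nonnegative real numbers, let B : X → X be a bounded linear operator with operator norm at most C_B, let T > 0, p ∈ L²((0,T);ℝ), let v : [0,T] → X be a continuous function, and let w : [0,T] → X be a continuous function satisfying, for every k ≥ 1 and every t ∈ [0,T], ⟨w(t), φ_k⟩ = − ∫₀^t e^{−λ_k(t−s)} p(s) ⟨B v(s), φ_k⟩ ds. Then sup_{t∈[0,T]} ‖w(t)‖² ≤ C_B² e^{T} ‖p‖²_{L²(0,T)} · sup_{t∈[0,T]} ‖v(t)‖². -/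
open MeasureTheory
open scoped RealInnerProductSpace

/-!
Since `λ_k ≥ 0`, the kernel `e^{-λ_k (t-s)} p(s)` of the `k`-th coefficient of `w t` is bounded
by `|p(s)|`, so Cauchy–Schwarz gives `⟪w t, φ_k⟫² ≤ ‖p‖² ∫₀ᵗ ⟪B v(s), φ_k⟫² ds`. Summing over `k`,
with Parseval on the left and Bessel under the integral, yields
`‖w t‖² ≤ ‖p‖² ∫₀ᵗ ‖B v(s)‖² ds ≤ ‖p‖² C_B² t sup ‖v‖²`, and `t ≤ T ≤ e^T`.
-/

theorem IsCompact.le_ciSup₂_of_continuousOn {α : Type*} [TopologicalSpace α] {s : Set α}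
    (hs : IsCompact s) {f : α → ℝ} (hf : ContinuousOn f s) {x : α} (hx : x ∈ s) :
    f x ≤ ⨆ y ∈ s, f y := by
  refine le_ciSup₂ (f := fun y (_ : y ∈ s) => f y) ((hs.bddAbove_image hf).mono ?_) x hx
  rintro _ ⟨_, ⟨y, rfl⟩, ⟨hy, rfl⟩⟩
  exact ⟨y, hy, rfl⟩

theorem ContinuousOn.memLp_restrict_Ioc {E : Type*} [NormedAddCommGroup E] {f : ℝ → E} {a b : ℝ}
    {q : ENNReal} (hf : ContinuousOn f (Set.Icc a b)) :
    MemLp f q (volume.restrict (Set.Ioc a b)) := by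
  obtain ⟨C, hC⟩ := isCompact_Icc.exists_bound_of_continuousOn hf
  exact MemLp.of_bound ((hf.mono Set.Ioc_subset_Icc_self).aestronglyMeasurable measurableSet_Ioc) C
    (ae_restrict_of_forall_mem measurableSet_Ioc fun x hx => hC x (Set.Ioc_subset_Icc_self hx))

section CauchySchwarz

variable {α : Type*} [MeasurableSpace α] {μ : Measure α}

theorem MeasureTheory.MemLp.inner_toLp_eq_integral_mul {f g : α → ℝ} (hf : MemLp f 2 μ)
    (hg : MemLp g 2 μ) : ⟪hf.toLp f, hg.toLp g⟫ = ∫ a, f a * g a ∂μ := by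
  rw [L2.inner_def]
  refine integral_congr_ae ?_
  filter_upwards [hf.coeFn_toLp, hg.coeFn_toLp] with a hfa hga
  rw [hfa, hga, real_inner_eq_re_inner, RCLike.inner_apply, conj_trivial, mul_comm]
  rfl

theorem sq_integral_mul_le {f g : α → ℝ} (hf : MemLp f 2 μ) (hg : MemLp g 2 μ) :
    (∫ a, f a * g a ∂μ) ^ 2 ≤ (∫ a, f a ^ 2 ∂μ) * ∫ a, g a ^ 2 ∂μ := by
  have h := real_inner_mul_inner_self_le (hf.toLp f) (hg.toLp g)
  simpa only [hf.inner_toLp_eq_integral_mul, hg.inner_toLp_eq_integral_mul, ← sq] using h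

theorem sq_integral_mul_le_of_abs_le {f p g : α → ℝ} (hf : AEStronglyMeasurable f μ)
    (hfp : ∀ᵐ a ∂μ, |f a| ≤ |p a|) (hp : MemLp p 2 μ) (hg : MemLp g 2 μ) :
    (∫ a, f a * g a ∂μ) ^ 2 ≤ (∫ a, p a ^ 2 ∂μ) * ∫ a, g a ^ 2 ∂μ := by
  have hf2 : MemLp f 2 μ := hp.of_le hf (by simpa only [Real.norm_eq_abs] using hfp)
  have hfp2 : ∫ a, f a ^ 2 ∂μ ≤ ∫ a, p a ^ 2 ∂μ :=
    integral_mono_ae hf2.integrable_sq hp.integrable_sq (hfp.mono fun a => sq_le_sq.mpr)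
  calc (∫ a, f a * g a ∂μ) ^ 2 ≤ (∫ a, f a ^ 2 ∂μ) * ∫ a, g a ^ 2 ∂μ :=
        sq_integral_mul_le hf2 hg
    _ ≤ (∫ a, p a ^ 2 ∂μ) * ∫ a, g a ^ 2 ∂μ :=
      mul_le_mul_of_nonneg_right hfp2 (integral_nonneg fun a => sq_nonneg _)

end CauchySchwarz

theorem ContinuousLinearMap.sq_norm_apply_le_of_opNorm_le {E F : Type*} [SeminormedAddCommGroup E]
    [SeminormedAddCommGroup F] [NormedSpace ℝ E] [NormedSpace ℝ F] (B : E →L[ℝ] F) {C : ℝ}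
    (hB : ‖B‖ ≤ C) (x : E) : ‖B x‖ ^ 2 ≤ C ^ 2 * ‖x‖ ^ 2 := by
  rw [← mul_pow]
  exact pow_le_pow_left₀ (norm_nonneg _) (B.le_of_opNorm_le hB x) 2

theorem setIntegral_Ioc_le_mul_of_norm_le {f : ℝ → ℝ} {a b C : ℝ} (hab : a ≤ b)
    (hf : ∀ s ∈ Set.Ioc a b, ‖f s‖ ≤ C) : ∫ s in Set.Ioc a b, f s ≤ C * (b - a) := by
  have h := norm_setIntegral_le_of_norm_le_const (μ := volume) measure_Ioc_lt_top hf
  rw [Real.volume_real_Ioc_of_le hab] at h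
  exact (le_abs_self _).trans h

theorem sq_setIntegral_exp_mul_le {lam t : ℝ} (hlam : 0 ≤ lam) {p g : ℝ → ℝ} (hp : Measurable p)
    (hp2 : IntegrableOn (fun s => p s ^ 2) (Set.Ioc 0 t)) (hg : ContinuousOn g (Set.Icc 0 t)) :
    (∫ s in Set.Ioc 0 t, Real.exp (-lam * (t - s)) * p s * g s) ^ 2 ≤
      (∫ s in Set.Ioc 0 t, p s ^ 2) * ∫ s in Set.Ioc 0 t, g s ^ 2 := by
  refine sq_integral_mul_le_of_abs_le (by fun_prop) ?_
    ((memLp_two_iff_integrable_sq hp.aestronglyMeasurable).mpr hp2) hg.memLp_restrict_Ioc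
  refine ae_restrict_of_forall_mem measurableSet_Ioc fun s hs => ?_
  rw [abs_mul, abs_of_pos (Real.exp_pos _)]
  refine mul_le_of_le_one_left (abs_nonneg _) (Real.exp_le_one_iff.mpr ?_)
  nlinarith [hs.2]

section HilbertBasis

variable {ι X : Type*} [NormedAddCommGroup X] [InnerProductSpace ℝ X]

theorem HilbertBasis.hasSum_inner_sq (b : HilbertBasis ι ℝ X) (x : X) :
    HasSum (fun i => ⟪x, b i⟫ ^ 2) (‖x‖ ^ 2) := by
  simpa only [real_inner_comm x, ← sq, real_inner_self_eq_norm_sq] using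
    b.hasSum_inner_mul_inner x x

theorem HilbertBasis.norm_sq_le_of_inner_sq_le_integral {α : Type*} [MeasurableSpace α]
    {μ : Measure α} (b : HilbertBasis ι ℝ X) {x : X} {F : α → X} (hF : MemLp F 2 μ) {c : ℝ}
    (hc : 0 ≤ c) (h : ∀ i, ⟪x, b i⟫ ^ 2 ≤ c * ∫ a, ⟪F a, b i⟫ ^ 2 ∂μ) :
    ‖x‖ ^ 2 ≤ c * ∫ a, ‖F a‖ ^ 2 ∂μ := by
  have hcoeff : ∀ i, Integrable (fun a => ⟪F a, b i⟫ ^ 2) μ := fun i =>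
    (hF.inner_const (b i)).integrable_sq
  refine hasSum_le_of_sum_le (b.hasSum_inner_sq x) fun s => ?_
  calc ∑ i ∈ s, ⟪x, b i⟫ ^ 2 ≤ ∑ i ∈ s, c * ∫ a, ⟪F a, b i⟫ ^ 2 ∂μ :=
        Finset.sum_le_sum fun i _ => h i
    _ = c * ∫ a, ∑ i ∈ s, ⟪F a, b i⟫ ^ 2 ∂μ := by
      rw [← Finset.mul_sum, integral_finsetSum s fun i _ => hcoeff i]
    _ ≤ c * ∫ a, ‖F a‖ ^ 2 ∂μ := by
      refine mul_le_mul_of_nonneg_left (integral_mono (integrable_finsetSum s fun i _ => hcoeff i)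
        ((memLp_two_iff_integrable_sq_norm hF.1).mp hF) fun a => ?_) hc
      simpa only [Real.norm_eq_abs, sq_abs, real_inner_comm (F a)] using
        b.orthonormal.sum_inner_products_le (F a) (s := s)

theorem HilbertBasis.norm_sq_le_of_inner_eq_integral_exp_mul (b : HilbertBasis ι ℝ X)
    {lam : ι → ℝ} (hlam : ∀ i, 0 ≤ lam i) {t : ℝ} (ht : 0 ≤ t) {p : ℝ → ℝ} (hp : Measurable p)
    (hp2 : IntegrableOn (fun s => p s ^ 2) (Set.Ioc 0 t))
    {F : ℝ → X} (hF : ContinuousOn F (Set.Icc 0 t)) {x : X}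
    (hx : ∀ i, ⟪x, b i⟫ = -∫ s in (0:ℝ)..t, Real.exp (-lam i * (t - s)) * p s * ⟪F s, b i⟫) :
    ‖x‖ ^ 2 ≤ (∫ s in Set.Ioc 0 t, p s ^ 2) * ∫ s in Set.Ioc 0 t, ‖F s‖ ^ 2 := by
  refine b.norm_sq_le_of_inner_sq_le_integral hF.memLp_restrict_Ioc
    (integral_nonneg fun s => sq_nonneg _) fun i => ?_
  rw [hx i, neg_sq, intervalIntegral.integral_of_le ht]
  exact sq_setIntegral_exp_mul_le (hlam i) hp hp2 (hF.inner continuousOn_const)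

end HilbertBasis

theorem difference_estimate_general
    {X : Type*} [NormedAddCommGroup X] [InnerProductSpace ℝ X]
    (φ : HilbertBasis ℕ ℝ X)
    (lam : ℕ → ℝ) (hlam0 : ∀ k, 0 ≤ lam k)
    (B : X →L[ℝ] X) (CB : ℝ) (hBnorm : ‖B‖ ≤ CB)
    (T : ℝ)
    (p : ℝ → ℝ) (hpm : Measurable p)
    (hp2 : IntervalIntegrable (fun s => p s ^ 2) volume 0 T)
    (v : ℝ → X) (hv : ContinuousOn v (Set.Icc 0 T))
    (w : ℝ → X)
    (heq : ∀ (k : ℕ), ∀ t ∈ Set.Icc (0:ℝ) T,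
      ⟪w t, φ k⟫ =
        -∫ s in (0:ℝ)..t, Real.exp (-lam k * (t - s)) * p s * ⟪B (v s), φ k⟫) :
    ∀ t ∈ Set.Icc (0:ℝ) T,
      ‖w t‖ ^ 2 ≤
        CB ^ 2 * Real.exp T * (∫ s in (0:ℝ)..T, p s ^ 2) *
          ⨆ s ∈ Set.Icc (0:ℝ) T, ‖v s‖ ^ 2 := by
  rintro t ⟨ht0, htT⟩
  set M := ⨆ s ∈ Set.Icc (0:ℝ) T, ‖v s‖ ^ 2
  have hM : ∀ s ∈ Set.Icc 0 T, ‖v s‖ ^ 2 ≤ M := fun s hs =>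
    isCompact_Icc.le_ciSup₂_of_continuousOn (hv.norm.pow 2) hs
  have hM0 : 0 ≤ M := (sq_nonneg _).trans (hM t ⟨ht0, htT⟩)
  have hw := φ.norm_sq_le_of_inner_eq_integral_exp_mul hlam0 ht0 hpm
    (hp2.1.mono_set (Set.Ioc_subset_Ioc_right htT))
    (B.continuous.comp_continuousOn (hv.mono (Set.Icc_subset_Icc_right htT)))
    fun k => heq k t ⟨ht0, htT⟩
  have hP0 : 0 ≤ ∫ s in (0:ℝ)..T, p s ^ 2 :=
    intervalIntegral.integral_nonneg (ht0.trans htT) fun s _ => sq_nonneg _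
  have hP : ∫ s in Set.Ioc 0 t, p s ^ 2 ≤ ∫ s in (0:ℝ)..T, p s ^ 2 := by
    rw [intervalIntegral.integral_of_le (ht0.trans htT)]
    exact setIntegral_mono_set hp2.1 (ae_of_all _ fun s => sq_nonneg _)
      (Set.Ioc_subset_Ioc_right htT).eventuallyLE
  have hBv : ∫ s in Set.Ioc 0 t, ‖B (v s)‖ ^ 2 ≤ CB ^ 2 * M * (t - 0) := by
    refine setIntegral_Ioc_le_mul_of_norm_le ht0 fun s hs => ?_
    rw [norm_pow, norm_norm]
    exact (B.sq_norm_apply_le_of_opNorm_le hBnorm (v s)).trans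
      (mul_le_mul_of_nonneg_left (hM s ⟨hs.1.le, hs.2.trans htT⟩) (sq_nonneg _))
  have ht : t ≤ Real.exp T := by linarith [Real.add_one_le_exp T]
  calc ‖w t‖ ^ 2 ≤ (∫ s in (0:ℝ)..T, p s ^ 2) * (CB ^ 2 * M * (t - 0)) :=
        hw.trans (mul_le_mul hP hBv (integral_nonneg fun s => sq_nonneg _) hP0)
    _ = CB ^ 2 * (∫ s in (0:ℝ)..T, p s ^ 2) * M * t := by ring
    _ ≤ CB ^ 2 * (∫ s in (0:ℝ)..T, p s ^ 2) * M * Real.exp T :=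
        mul_le_mul_of_nonneg_left ht (by positivity)
    _ = CB ^ 2 * Real.exp T * (∫ s in (0:ℝ)..T, p s ^ 2) * M := by ring

/-- Estimate on the difference `w = v - v̄` between the nonlinear and linearized solutions,
where `w` solves `w' + Aw + p(t)Bv = 0`, `w(0) = 0`. -/
theorem difference_estimate
    {X : Type*} [NormedAddCommGroup X] [InnerProductSpace ℝ X] [CompleteSpace X]
    [TopologicalSpace.SeparableSpace X]
    (φ : HilbertBasis ℕ ℝ X)
    (lam : ℕ → ℝ) (hlam0 : ∀ k, 0 ≤ lam k) (hmono : Monotone lam)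
    (B : X →L[ℝ] X) (CB : ℝ) (hBnorm : ‖B‖ ≤ CB)
    (T : ℝ) (hT : 0 < T)
    (p : ℝ → ℝ) (hpm : Measurable p)
    (hp2 : IntervalIntegrable (fun s => p s ^ 2) volume 0 T)
    (v : ℝ → X) (hv : ContinuousOn v (Set.Icc 0 T))
    (w : ℝ → X) (hw : ContinuousOn w (Set.Icc 0 T))
    (heq : ∀ (k : ℕ), ∀ t ∈ Set.Icc (0:ℝ) T,
      ⟪w t, φ k⟫ =
        -∫ s in (0:ℝ)..t, Real.exp (-lam k * (t - s)) * p s * ⟪B (v s), φ k⟫) :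
    ∀ t ∈ Set.Icc (0:ℝ) T,
      ‖w t‖ ^ 2 ≤
        CB ^ 2 * Real.exp T * (∫ s in (0:ℝ)..T, p s ^ 2) *
          ⨆ s ∈ Set.Icc (0:ℝ) T, ‖v s‖ ^ 2 :=
  difference_estimate_general φ lam hlam0 B CB hBnorm T p hpm hp2 v hv w heq
end

section
/- Let μ : [0,1] → ℝ be twice continuously differentiable with μ'(1) + μ'(0) ≠ 0 and μ'(1) − μ'(0) ≠ 0, and set d_k := √2 ∫₀¹ μ(x) cos(kπx) dx for k ≥ 1. If d_k ≠ 0 for every k ≥ 1, then there exists a constant C > 0 such that |d_k| ≥ C k^{−2} for every k ≥ 1. -/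
/-!
Integrating by parts twice,
`(kπ)² ∫₀¹ μ(x) cos(kπx) dx = (-1)ᵏ μ'(1) - μ'(0) - ∫₀¹ μ''(x) cos(kπx) dx`.
The boundary term has absolute value at least `min |μ'(1) - μ'(0)| |μ'(1) + μ'(0)| > 0`, and the
last integral tends to `0` by the Riemann–Lebesgue lemma, so `k² |d_k|` is bounded below for
large `k`; the finitely many remaining `d_k` are nonzero.
-/

open MeasureTheory Real Set Filter Topology FourierTransform

theorem tendsto_integral_mul_cos_cocompact {g : ℝ → ℝ} (hg : Integrable g) :
    Tendsto (fun ω : ℝ => ∫ x, g x * cos (ω * x)) (cocompact ℝ) (𝓝 0) := by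
  have hRL := ((Complex.continuous_re.tendsto 0).comp
    (Real.tendsto_integral_exp_smul_cocompact (fun x => (g x : ℂ)))).comp
    (tendsto_cocompact_mul_right₀ (inv_ne_zero two_pi_pos.ne'))
  rw [Complex.zero_re] at hRL
  -- `cos (ω * x)` is the real part of `𝐞 (-(x * (ω * (2 * π)⁻¹)))`.
  refine hRL.congr fun ω => ?_
  have hint : Integrable (fun x : ℝ => 𝐞 (-(x * (ω * (2 * π)⁻¹))) • (g x : ℂ)) := by
    simpa [RCLike.inner_apply, mul_comm] using
      (Real.fourierIntegral_convergent_iff (μ := volume) (ω * (2 * π)⁻¹)).2 hg.ofReal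
  simp only [Function.comp_apply, ← Complex.reCLM_apply,
    ← ContinuousLinearMap.integral_comp_comm _ hint]
  congr 1 with x
  rw [Complex.reCLM_apply, Circle.smul_def, Real.fourierChar_apply, smul_eq_mul,
    Complex.re_mul_ofReal, Complex.exp_ofReal_mul_I_re, mul_comm]
  congr 1
  field_simp
  exact cos_neg _

theorem tendsto_setIntegral_mul_cos_cocompact {g : ℝ → ℝ} {s : Set ℝ} (hs : MeasurableSet s)
    (hg : IntegrableOn g s) :
    Tendsto (fun ω : ℝ => ∫ x in s, g x * cos (ω * x)) (cocompact ℝ) (𝓝 0) := by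
  refine (tendsto_integral_mul_cos_cocompact (hg.integrable_indicator hs)).congr fun ω => ?_
  rw [← integral_indicator hs]
  congr 1 with x
  by_cases hx : x ∈ s <;> simp [hx]

theorem tendsto_intervalIntegral_mul_cos_cocompact {g : ℝ → ℝ} {a b : ℝ}
    (hg : IntervalIntegrable g volume a b) :
    Tendsto (fun ω : ℝ => ∫ x in a..b, g x * cos (ω * x)) (cocompact ℝ) (𝓝 0) := by
  simpa only [intervalIntegral, sub_zero] using
    (tendsto_setIntegral_mul_cos_cocompact measurableSet_Ioc hg.1).sub
      (tendsto_setIntegral_mul_cos_cocompact measurableSet_Ioc hg.2)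

section IntegrationByParts

variable {f f' f'' : ℝ → ℝ} {a b ω : ℝ}

theorem mul_integral_mul_cos_eq (hf : ∀ x ∈ uIcc a b, HasDerivWithinAt f (f' x) (uIcc a b) x)
    (hf' : IntervalIntegrable f' volume a b) :
    ω * ∫ x in a..b, f x * cos (ω * x) =
      f b * sin (ω * b) - f a * sin (ω * a) - ∫ x in a..b, f' x * sin (ω * x) := by
  have hsin (x : ℝ) : HasDerivAt (fun x => sin (ω * x)) (cos (ω * x) * ω) x := by
    simpa using ((hasDerivAt_id x).const_mul ω).sin
  calc ω * ∫ x in a..b, f x * cos (ω * x) = ∫ x in a..b, f x * (cos (ω * x) * ω) := by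
        rw [← intervalIntegral.integral_const_mul]
        congr 1 with x
        ring
    _ = _ := intervalIntegral.integral_mul_deriv_eq_deriv_mul_of_hasDerivWithinAt hf
        (fun x _ => (hsin x).hasDerivWithinAt) hf'
        ((by fun_prop : Continuous fun x => cos (ω * x) * ω).intervalIntegrable a b)

theorem mul_integral_mul_sin_eq (hf : ∀ x ∈ uIcc a b, HasDerivWithinAt f (f' x) (uIcc a b) x)
    (hf' : IntervalIntegrable f' volume a b) :
    ω * ∫ x in a..b, f x * sin (ω * x) =
      f a * cos (ω * a) - f b * cos (ω * b) + ∫ x in a..b, f' x * cos (ω * x) := by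
  have hcos (x : ℝ) : HasDerivAt (fun x => -cos (ω * x)) (sin (ω * x) * ω) x := by
    simpa using ((hasDerivAt_id x).const_mul ω).cos.fun_neg
  calc ω * ∫ x in a..b, f x * sin (ω * x) = ∫ x in a..b, f x * (sin (ω * x) * ω) := by
        rw [← intervalIntegral.integral_const_mul]
        congr 1 with x
        ring
    _ = _ := by
        rw [intervalIntegral.integral_mul_deriv_eq_deriv_mul_of_hasDerivWithinAt hf
          (fun x _ => (hcos x).hasDerivWithinAt) hf'
          ((by fun_prop : Continuous fun x => sin (ω * x) * ω).intervalIntegrable a b)]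
        simp only [mul_neg, intervalIntegral.integral_neg]
        ring

theorem sq_mul_integral_mul_cos_eq (hf : ∀ x ∈ uIcc a b, HasDerivWithinAt f (f' x) (uIcc a b) x)
    (hf' : ∀ x ∈ uIcc a b, HasDerivWithinAt f' (f'' x) (uIcc a b) x)
    (hf'' : IntervalIntegrable f'' volume a b) :
    ω ^ 2 * ∫ x in a..b, f x * cos (ω * x) =
      ω * (f b * sin (ω * b) - f a * sin (ω * a)) + (f' b * cos (ω * b) - f' a * cos (ω * a))
        - ∫ x in a..b, f'' x * cos (ω * x) := by
  have hf'_int : IntervalIntegrable f' volume a b :=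
    ContinuousOn.intervalIntegrable fun x hx => (hf' x hx).continuousWithinAt
  rw [sq, mul_assoc, mul_integral_mul_cos_eq hf hf'_int, mul_sub, mul_integral_mul_sin_eq hf' hf'']
  ring

end IntegrationByParts

theorem natCast_mul_pi_sq_mul_integral_mul_cos_eq {f f' f'' : ℝ → ℝ} (k : ℕ)
    (hf : ∀ x ∈ Icc (0 : ℝ) 1, HasDerivWithinAt f (f' x) (Icc 0 1) x)
    (hf' : ∀ x ∈ Icc (0 : ℝ) 1, HasDerivWithinAt f' (f'' x) (Icc 0 1) x)
    (hf'' : IntervalIntegrable f'' volume 0 1) :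
    ((k : ℝ) * π) ^ 2 * ∫ x in (0 : ℝ)..1, f x * cos (k * π * x) =
      (-1) ^ k * f' 1 - f' 0 - ∫ x in (0 : ℝ)..1, f'' x * cos (k * π * x) := by
  rw [← uIcc_of_le zero_le_one] at hf hf'
  simpa [sin_nat_mul_pi, cos_nat_mul_pi, mul_comm (f' 1)] using
    sq_mul_integral_mul_cos_eq (ω := k * π) hf hf' hf''

theorem min_abs_sub_abs_add_le_abs_neg_one_pow_mul_sub (a b : ℝ) (k : ℕ) :
    min |a - b| |a + b| ≤ |(-1) ^ k * a - b| := by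
  rcases k.even_or_odd with hk | hk
  · simp [hk.neg_one_pow]
  · rw [hk.neg_one_pow, neg_one_mul, ← neg_add', abs_neg]
    exact min_le_right _ _

theorem exists_pos_forall_le_of_eventually_le {u : ℕ → ℝ} {c : ℝ} (hc : 0 < c)
    (hu : ∀ k, 1 ≤ k → 0 < u k) (hev : ∀ᶠ k in atTop, c ≤ u k) :
    ∃ C > 0, ∀ k, 1 ≤ k → C ≤ u k := by
  obtain ⟨N, hN⟩ := eventually_atTop.1 hev
  obtain ⟨m, hm, hmin⟩ := (Finset.Icc 1 (max N 1)).exists_min_image u ⟨1, by simp⟩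
  refine ⟨min c (u m), lt_min hc (hu m (Finset.mem_Icc.1 hm).1), fun k hk => ?_⟩
  rcases le_or_gt N k with hNk | hkN
  · exact (min_le_left _ _).trans (hN k hNk)
  · exact (min_le_right _ _).trans (hmin k (Finset.mem_Icc.2 ⟨hk, by omega⟩))

theorem eventually_le_natCast_mul_pi_sq_mul_abs_integral_mul_cos {f f' f'' : ℝ → ℝ}
    (hf : ∀ x ∈ Icc (0 : ℝ) 1, HasDerivWithinAt f (f' x) (Icc 0 1) x)
    (hf' : ∀ x ∈ Icc (0 : ℝ) 1, HasDerivWithinAt f' (f'' x) (Icc 0 1) x)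
    (hf'' : IntervalIntegrable f'' volume 0 1)
    (hsum : f' 1 + f' 0 ≠ 0) (hdiff : f' 1 - f' 0 ≠ 0) :
    ∀ᶠ k : ℕ in atTop, min |f' 1 - f' 0| |f' 1 + f' 0| / 2 ≤
      ((k : ℝ) * π) ^ 2 * |∫ x in (0 : ℝ)..1, f x * cos (k * π * x)| := by
  set ε := min |f' 1 - f' 0| |f' 1 + f' 0|
  have hε : 0 < ε := lt_min (abs_pos.2 hdiff) (abs_pos.2 hsum)
  have hkπ : Tendsto (fun k : ℕ => (k : ℝ) * π) atTop (cocompact ℝ) :=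
    (tendsto_natCast_atTop_atTop.atTop_mul_const pi_pos).mono_right atTop_le_cocompact
  have hR := ((tendsto_intervalIntegral_mul_cos_cocompact hf'').comp hkπ).abs
  rw [abs_zero] at hR
  filter_upwards [hR.eventually_lt_const (half_pos hε)] with k hk
  rw [← abs_of_nonneg (sq_nonneg ((k : ℝ) * π)), ← abs_mul,
    natCast_mul_pi_sq_mul_integral_mul_cos_eq k hf hf' hf'']
  have hboundary := min_abs_sub_abs_add_le_abs_neg_one_pow_mul_sub (f' 1) (f' 0) k
  have htriangle := abs_sub_abs_le_abs_sub ((-1) ^ k * f' 1 - f' 0)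
    (∫ x in (0 : ℝ)..1, f'' x * cos (k * π * x))
  simp only [Function.comp_apply] at hk
  linarith

/-- Lower bound on the Fourier coefficients `d_k = √2 ∫₀¹ μ(x) cos(kπx) dx` for a `C²`
potential `μ` with `μ'(1) ± μ'(0) ≠ 0` and `d_k ≠ 0` for all `k`: there is `C > 0` with
`|d_k| ≥ C k⁻²`. -/
theorem fourier_coefficients_neumann_lower_bound
    (μ μ' μ'' : ℝ → ℝ)
    (hμ : ∀ x ∈ Set.Icc (0:ℝ) 1, HasDerivWithinAt μ (μ' x) (Set.Icc 0 1) x)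
    (hμ' : ∀ x ∈ Set.Icc (0:ℝ) 1, HasDerivWithinAt μ' (μ'' x) (Set.Icc 0 1) x)
    (hμ'' : ContinuousOn μ'' (Set.Icc 0 1))
    (hsum : μ' 1 + μ' 0 ≠ 0) (hdiff : μ' 1 - μ' 0 ≠ 0)
    (d : ℕ → ℝ)
    (hd : ∀ k : ℕ, 1 ≤ k →
      d k = Real.sqrt 2 * ∫ x in (0:ℝ)..1, μ x * Real.cos (k * Real.pi * x))
    (hne : ∀ k : ℕ, 1 ≤ k → d k ≠ 0) :
    ∃ C > (0:ℝ), ∀ k : ℕ, 1 ≤ k → C / (k : ℝ) ^ 2 ≤ |d k| := by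
  set ε := min |μ' 1 - μ' 0| |μ' 1 + μ' 0|
  have hε : 0 < ε := lt_min (abs_pos.2 hdiff) (abs_pos.2 hsum)
  have hμ''_int : IntervalIntegrable μ'' volume 0 1 :=
    hμ''.intervalIntegrable_of_Icc zero_le_one
  have hev : ∀ᶠ k : ℕ in atTop, √2 * (ε / 2) / π ^ 2 ≤ (k : ℝ) ^ 2 * |d k| := by
    filter_upwards [eventually_le_natCast_mul_pi_sq_mul_abs_integral_mul_cos hμ hμ' hμ''_int
      hsum hdiff, eventually_ge_atTop 1] with k hk hk1
    rw [div_le_iff₀ (by positivity), hd k hk1, abs_mul, abs_of_nonneg (sqrt_nonneg 2)]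
    calc √2 * (ε / 2)
        ≤ √2 * (((k : ℝ) * π) ^ 2 * |∫ x in (0 : ℝ)..1, μ x * cos (k * π * x)|) := by gcongr
      _ = _ := by ring
  obtain ⟨C, hC, hCk⟩ := exists_pos_forall_le_of_eventually_le (by positivity)
    (fun k hk => by have := hne k hk; positivity) hev
  exact ⟨C, hC, fun k hk => (div_le_iff₀' (by positivity)).2 (hCk k hk)⟩
end
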